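/- arXiv:2009.14706 — 3 statements merged into one kernel-verified Lean document; each statement's English description precedes it below -/
import Mathlib

section
/- If a matrix B with unit-norm columns has spark(B) ≤ n (i.e., some columns are dependent) and mutual coherence μ, then spark(B) ≥ 1 + 1/μ. -/
open Matrix BigOperators

/-- `x` is `s`-sparse: it has at most `s` nonzero entries. -/
def Sparse {κ : Type*} (s : ℕ) (x : κ → ℝ) : Prop :=
  (Function.support x).ncard ≤ s

/-- `B` satisfies the `(s, δ)`-restricted isometry property. -/
def RIP {ι κ : Type*} [Fintype ι] [Fintype κ] (B : Matrix ι κ ℝ) (s : ℕ) (δ : ℝ) : Prop :=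
  ∀ x : κ → ℝ, Sparse s x →
    (1 - δ) * (∑ j, x j ^ 2) ≤ (∑ i, (B.mulVec x) i ^ 2) ∧
    (∑ i, (B.mulVec x) i ^ 2) ≤ (1 + δ) * (∑ j, x j ^ 2)


/-- The spark of B: the least number of nonzero entries of a nonzero kernel
vector, i.e. the size of the smallest linearly dependent set of columns. -/
noncomputable def spark {m n : ℕ} (B : Matrix (Fin m) (Fin n) ℝ) : ℕ :=
  sInf {k : ℕ | ∃ c : Fin n → ℝ, c ≠ 0 ∧ B.mulVec c = 0 ∧
    (Function.support c).ncard = k}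

open Function

/-!
If `B c = 0` with `c ≠ 0`, then `c` is also in the kernel of the Gram matrix `G = Bᵀ B`, whose
diagonal is `1` and whose off-diagonal entries are at most `μ` in absolute value. Reading the row
of `G c = 0` at an index `i` where `|c i|` is maximal gives
`|c i| ≤ ∑_{j ∈ supp c, j ≠ i} |G i j| |c j| ≤ μ (|supp c| - 1) |c i|`,
so `|supp c| ≥ 1 + 1/μ`. Taking `c` of minimal support gives the bound on the spark.
-/

section Gershgorin

variable {κ : Type*} [Fintype κ] {A : Matrix κ κ ℝ} {μ : ℝ} {c : κ → ℝ}

theorem abs_le_mul_card_erase_mul_of_mulVec_eq_zero [DecidableEq κ]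
    (hdiag : ∀ i, A i i = 1) (hoff : ∀ i j, i ≠ j → |A i j| ≤ μ) (hAc : A *ᵥ c = 0)
    {S : Finset κ} (hS : ∀ j, c j ≠ 0 → j ∈ S) {i : κ} (hi : i ∈ S)
    (hmax : ∀ j ∈ S, |c j| ≤ |c i|) :
    |c i| ≤ μ * (S.erase i).card * |c i| := by
  have hrow : ∑ j ∈ S, A i j * c j = 0 := by
    rw [Finset.sum_subset (Finset.subset_univ S) fun j _ hj => by
      rw [not_imp_comm.mp (hS j) hj, mul_zero]]
    exact congrFun hAc i
  have hci : c i = -∑ j ∈ S.erase i, A i j * c j := by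
    rw [← Finset.add_sum_erase S _ hi, hdiag, one_mul] at hrow
    linarith
  calc |c i| ≤ ∑ j ∈ S.erase i, |A i j| * |c j| := by
        rw [hci, abs_neg]
        simpa only [abs_mul] using Finset.abs_sum_le_sum_abs (fun j => A i j * c j) (S.erase i)
    _ ≤ ∑ j ∈ S.erase i, μ * |c i| := by
        refine Finset.sum_le_sum fun j hj => ?_
        obtain ⟨hji, hjS⟩ := Finset.mem_erase.mp hj
        exact mul_le_mul (hoff i j hji.symm) (hmax j hjS) (abs_nonneg _)
          ((abs_nonneg _).trans (hoff i j hji.symm))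
    _ = μ * (S.erase i).card * |c i| := by
        rw [Finset.sum_const, nsmul_eq_mul]
        ring

theorem one_add_one_div_le_ncard_support_of_mulVec_eq_zero
    (hdiag : ∀ i, A i i = 1) (hoff : ∀ i j, i ≠ j → |A i j| ≤ μ)
    (hc : c ≠ 0) (hAc : A *ᵥ c = 0) :
    1 + 1 / μ ≤ (support c).ncard := by
  classical
  set S := (support c).toFinset
  have hSne : S.Nonempty := by simpa [S, Set.toFinset_nonempty, support_nonempty_iff] using hc
  obtain ⟨i, hiS, hmax⟩ := S.exists_max_image (|c ·|) hSne
  have hci : 0 < |c i| := abs_pos.mpr (by simpa [S] using hiS)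
  have hbound := abs_le_mul_card_erase_mul_of_mulVec_eq_zero hdiag hoff hAc
    (S := S) (fun j hj => by simpa [S] using hj) hiS hmax
  have hone : 1 ≤ μ * (S.erase i).card := one_le_of_le_mul_right₀ hci hbound
  have hμ : 0 < μ := pos_of_mul_pos_left (one_pos.trans_le hone) (Nat.cast_nonneg _)
  have hcard : ((support c).ncard : ℝ) = (S.erase i).card + 1 := by
    rw [Set.ncard_eq_toFinset_card']
    exact_mod_cast (Finset.card_erase_add_one hiS).symm
  rw [hcard, add_comm, one_div, add_le_add_iff_right, inv_le_iff_one_le_mul₀' hμ]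
  exact hone

end Gershgorin

theorem transpose_mul_self_apply {ι κ : Type*} [Fintype ι] (B : Matrix ι κ ℝ) (j k : κ) :
    (Bᵀ * B) j k = ∑ i, B i j * B i k := by
  simp only [mul_apply, transpose_apply]

theorem le_spark {m n : ℕ} {B : Matrix (Fin m) (Fin n) ℝ} {r : ℝ}
    (hdep : ∃ c : Fin n → ℝ, c ≠ 0 ∧ B *ᵥ c = 0)
    (h : ∀ c : Fin n → ℝ, c ≠ 0 → B *ᵥ c = 0 → r ≤ (support c).ncard) :
    r ≤ spark B := by
  obtain ⟨c, hc, hBc⟩ := hdep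
  obtain ⟨c', hc', hBc', hk⟩ := Nat.sInf_mem (⟨_, c, hc, hBc, rfl⟩ :
    {k : ℕ | ∃ c : Fin n → ℝ, c ≠ 0 ∧ B *ᵥ c = 0 ∧ (support c).ncard = k}.Nonempty)
  rw [spark, ← hk]
  exact h c' hc' hBc'

/-- For a matrix with unit-norm columns, coherence μ and some linearly dependent
columns, spark(B) ≥ 1 + 1/μ. -/
theorem stmt7 {m n : ℕ} (B : Matrix (Fin m) (Fin n) ℝ) (μ : ℝ)
    (hunit : ∀ j : Fin n, ∑ i, (B i j) ^ 2 = 1)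
    (hμ : ∀ j k : Fin n, j ≠ k → |∑ i, B i j * B i k| ≤ μ)
    (hdep : ∃ c : Fin n → ℝ, c ≠ 0 ∧ B.mulVec c = 0) :
    (1 : ℝ) + 1 / μ ≤ (spark B : ℝ) := by
  refine le_spark hdep fun c hc hBc => ?_
  refine one_add_one_div_le_ncard_support_of_mulVec_eq_zero (A := Bᵀ * B) ?_ ?_ hc ?_
  · intro j
    simpa only [transpose_mul_self_apply, sq] using hunit j
  · intro j k hjk
    simpa only [transpose_mul_self_apply] using hμ j k hjk
  · rw [← mulVec_mulVec, hBc, mulVec_zero]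
end

section
/- For a matrix B satisfying the (s, δ)-RIP, and for any two s/2-sparse vectors u, v with disjoint supports (s even), the inner product satisfies |⟨Bu, Bv⟩| ≤ δ‖u‖₂‖v‖₂. -/
open Matrix BigOperators

/-!
For orthogonal `x, y` with `x ± y` both `s`-sparse, polarization
`4 ⟪Bx, By⟫ = ‖B(x + y)‖² - ‖B(x - y)‖²` together with the upper RIP bound on the first term, the
lower one on the second, and `‖x ± y‖² = ‖x‖² + ‖y‖²` gives `2 ⟪Bx, By⟫ ≤ δ (‖x‖² + ‖y‖²)`.
Disjointly supported `u, v` are orthogonal and all their combinations are `s`-sparse, so this applies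
to `x = ‖v‖ u`, `y = ± ‖u‖ v`, which yields `|⟪Bu, Bv⟫| ≤ δ ‖u‖ ‖v‖`.
-/

variable {ι κ : Type*}

theorem Sparse.mono {s t : ℕ} {x : κ → ℝ} (hx : Sparse s x) (hst : s ≤ t) : Sparse t x :=
  hx.trans hst

theorem Sparse.smul_add_smul [Finite κ] {s t : ℕ} {x y : κ → ℝ} (hx : Sparse s x)
    (hy : Sparse t y) (c d : ℝ) : Sparse (s + t) (c • x + d • y) :=
  calc (Function.support (c • x + d • y)).ncard
      ≤ (Function.support x ∪ Function.support y).ncard :=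
        Set.ncard_le_ncard <| (Function.support_add _ _).trans <|
          Set.union_subset_union (Function.support_const_smul_subset c x)
            (Function.support_const_smul_subset d y)
    _ ≤ (Function.support x).ncard + (Function.support y).ncard := Set.ncard_union_le _ _
    _ ≤ s + t := add_le_add hx hy

theorem sum_sq_eq_dotProduct_self [Fintype κ] (x : κ → ℝ) : ∑ j, x j ^ 2 = x ⬝ᵥ x := by
  simp only [dotProduct, sq]

theorem dotProduct_eq_zero_of_disjoint_support [Fintype κ] {x y : κ → ℝ}
    (h : Disjoint (Function.support x) (Function.support y)) : x ⬝ᵥ y = 0 :=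
  Finset.sum_eq_zero fun j _ => by
    by_cases hx : x j = 0
    · simp [hx]
    · simp [Function.notMem_support.mp (Set.disjoint_left.mp h hx)]

theorem abs_le_mul_of_forall_two_mul_mul_le {P δ a b : ℝ} (ha : 0 < a) (hb : 0 < b)
    (h : ∀ c d : ℝ, 2 * (c * d) * P ≤ δ * (c ^ 2 * a ^ 2 + d ^ 2 * b ^ 2)) :
    |P| ≤ δ * a * b := by
  have h₁ := h b a
  have h₂ := h b (-a)
  have hab := mul_pos ha hb
  rw [abs_le]
  constructor <;> nlinarith

namespace RIP

variable [Fintype ι] [Fintype κ] {B : Matrix ι κ ℝ} {s : ℕ} {δ : ℝ}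

theorem mono {t : ℕ} (hB : RIP B s δ) (hts : t ≤ s) : RIP B t δ :=
  fun x hx => hB x (hx.mono hts)

theorem dotProduct_mulVec_self_le {x : κ → ℝ} (hB : RIP B s δ) (hx : Sparse s x) :
    (1 - δ) * (x ⬝ᵥ x) ≤ B *ᵥ x ⬝ᵥ B *ᵥ x ∧ B *ᵥ x ⬝ᵥ B *ᵥ x ≤ (1 + δ) * (x ⬝ᵥ x) := by
  simpa only [sum_sq_eq_dotProduct_self] using hB x hx

theorem two_mul_dotProduct_mulVec_le {x y : κ → ℝ} (hB : RIP B s δ)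
    (hadd : Sparse s (x + y)) (hsub : Sparse s (x - y)) (horth : x ⬝ᵥ y = 0) :
    2 * (B *ᵥ x ⬝ᵥ B *ᵥ y) ≤ δ * (x ⬝ᵥ x + y ⬝ᵥ y) := by
  have h_add := (hB.dotProduct_mulVec_self_le hadd).2
  have h_sub := (hB.dotProduct_mulVec_self_le hsub).1
  simp only [mulVec_add, mulVec_sub, add_dotProduct, dotProduct_add, sub_dotProduct,
    dotProduct_sub, dotProduct_comm y x, dotProduct_comm (B *ᵥ y) (B *ᵥ x), horth] at h_add h_sub
  linarith

theorem abs_dotProduct_mulVec_le [Finite κ] {t : ℕ} {u v : κ → ℝ} (hB : RIP B (s + t) δ)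
    (hu : Sparse s u) (hv : Sparse t v)
    (hdisj : Disjoint (Function.support u) (Function.support v)) :
    |B *ᵥ u ⬝ᵥ B *ᵥ v| ≤ δ * √(u ⬝ᵥ u) * √(v ⬝ᵥ v) := by
  have horth : u ⬝ᵥ v = 0 := dotProduct_eq_zero_of_disjoint_support hdisj
  have hscaled : ∀ c d : ℝ,
      2 * (c * d) * (B *ᵥ u ⬝ᵥ B *ᵥ v) ≤ δ * (c ^ 2 * (u ⬝ᵥ u) + d ^ 2 * (v ⬝ᵥ v)) := by
    intro c d
    have h := hB.two_mul_dotProduct_mulVec_le (x := c • u) (y := d • v)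
      (hu.smul_add_smul hv c d) (by simpa [sub_eq_add_neg] using hu.smul_add_smul hv c (-d))
      (by simp [horth])
    simp only [mulVec_smul, smul_dotProduct, dotProduct_smul, smul_eq_mul] at h
    linarith
  have hnonneg : ∀ w : κ → ℝ, 0 ≤ w ⬝ᵥ w := fun w =>
    Finset.sum_nonneg fun _ _ => mul_self_nonneg _
  by_cases hu0 : u = 0
  · simp [hu0]
  by_cases hv0 : v = 0
  · simp [hv0]
  have hpos : ∀ {w : κ → ℝ}, w ≠ 0 → 0 < √(w ⬝ᵥ w) := fun hw => Real.sqrt_pos.mpr <|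
    (hnonneg _).lt_of_ne (Ne.symm (dotProduct_self_eq_zero.not.mpr hw))
  rw [← Real.sq_sqrt (hnonneg u), ← Real.sq_sqrt (hnonneg v)] at hscaled
  exact abs_le_mul_of_forall_two_mul_mul_le (hpos hu0) (hpos hv0) hscaled

end RIP

theorem stmt9_general {m n : ℕ} (B : Matrix (Fin m) (Fin n) ℝ) (s : ℕ) (δ : ℝ)
    (hRIP : RIP B s δ)
    (u v : Fin n → ℝ) (hu : Sparse (s / 2) u) (hv : Sparse (s / 2) v)
    (hdisj : Disjoint (Function.support u) (Function.support v)) :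
    |∑ i, (B.mulVec u) i * (B.mulVec v) i| ≤
      δ * Real.sqrt (∑ j, (u j) ^ 2) * Real.sqrt (∑ j, (v j) ^ 2) := by
  simp only [sum_sq_eq_dotProduct_self]
  exact (hRIP.mono (by omega)).abs_dotProduct_mulVec_le hu hv hdisj

/-- Under the (s, δ)-RIP with s even, for s/2-sparse u, v with disjoint supports,
|⟨Bu, Bv⟩| ≤ δ‖u‖₂‖v‖₂. -/
theorem stmt9 {m n : ℕ} (B : Matrix (Fin m) (Fin n) ℝ) (s : ℕ) (δ : ℝ)
    (hs : Even s) (hRIP : RIP B s δ)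
    (u v : Fin n → ℝ) (hu : Sparse (s / 2) u) (hv : Sparse (s / 2) v)
    (hdisj : Disjoint (Function.support u) (Function.support v)) :
    |∑ i, (B.mulVec u) i * (B.mulVec v) i| ≤
      δ * Real.sqrt (∑ j, (u j) ^ 2) * Real.sqrt (∑ j, (v j) ^ 2) :=
  stmt9_general B s δ hRIP u v hu hv hdisj
end

section
/- If B has spark(B) > 2s, then for every y in the range of B restricted to s-sparse vectors, there is exactly one s-sparse x with Bx = y. -/
open Matrix BigOperators

/-- If every nonzero kernel vector of B has more than 2s nonzero entries (i.e.
spark(B) > 2s), then every y in the image of the s-sparse vectors under B has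
exactly one s-sparse preimage. -/
theorem stmt15 {m n : ℕ} (B : Matrix (Fin m) (Fin n) ℝ) (s : ℕ)
    (hspark : ∀ c : Fin n → ℝ, c ≠ 0 → B.mulVec c = 0 →
      2 * s < (Function.support c).ncard) :
    ∀ y : Fin m → ℝ, (∃ x : Fin n → ℝ, Sparse s x ∧ B.mulVec x = y) →
      ∃! x : Fin n → ℝ, Sparse s x ∧ B.mulVec x = y := by
  rintro y ⟨x, hx, hBx⟩
  refine ⟨x, ⟨hx, hBx⟩, ?_⟩
  rintro x' ⟨hx', hBx'⟩
  by_contra hne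
  have hc : x' - x ≠ 0 := sub_ne_zero.mpr hne
  have hker : B.mulVec (x' - x) = 0 := by
    rw [Matrix.mulVec_sub, hBx', hBx, sub_self]
  have hlt := hspark _ hc hker
  have hsub : Function.support (x' - x) ⊆ Function.support x' ∪ Function.support x := by
    intro i hi
    by_contra h
    simp only [Set.mem_union, Function.mem_support, not_or, not_not] at h
    apply hi
    simp [Pi.sub_apply, h.1, h.2]
  have hcard : (Function.support (x' - x)).ncard ≤ 2 * s := by
    calc (Function.support (x' - x)).ncard
        ≤ (Function.support x' ∪ Function.support x).ncard :=
          Set.ncard_le_ncard hsub (Set.toFinite _)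
      _ ≤ (Function.support x').ncard + (Function.support x).ncard :=
          Set.ncard_union_le _ _
      _ ≤ s + s := add_le_add hx' hx
      _ = 2 * s := (two_mul s).symm
  omega
end
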